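/- For every marked-standard shifted tableau S, Peak(|S|) ⊆ Des(S) △ (Des(S)+1). Moreover, if i ∈ Peak(|S|) and the entry i is primed in S, then i−1 ∈ Des(S) and i ∉ Des(S); if i is unprimed in S, then i−1 ∉ Des(S) and i ∈ Des(S). -/

import Mathlib

open scoped TensorProduct

/-! ## Words and permutations -/

/-- `w` is a permutation of `{1, …, n}` written as a word. -/
def IsPermWord (n : ℕ) (w : List ℕ) : Prop := w.Perm (List.range' 1 n)

/-- Descent set of a word `w = w₁ … w_n` : `{i ∈ [n-1] : w_i > w_{i+1}}` (1-indexed). -/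
def wordDes (w : List ℕ) : Finset ℕ :=
  (Finset.Icc 1 (w.length - 1)).filter (fun i => w.getD i 0 < w.getD (i - 1) 0)

/-- Peak set of a subset `D ⊆ [n-1]` : `{i ∈ D \ {1} : i - 1 ∉ D}`. -/
def peakOf (D : Finset ℕ) : Finset ℕ := D.filter (fun i => i ≠ 1 ∧ i - 1 ∉ D)

/-- Peak set of a word. -/
def wordPeak (w : List ℕ) : Finset ℕ := peakOf (wordDes w)

/-- The inverse of a permutation word on letters `1, …, n`. -/
def invWord (w : List ℕ) : List ℕ :=
  (List.range' 1 w.length).map (fun j => w.idxOf j + 1)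

/-- Standardization of a word with distinct letters. -/
def stWord (w : List ℕ) : List ℕ := w.map (fun x => w.countP (fun y => y < x) + 1)

/-- Swap the first two letters of a word. -/
def swap2 : List ℕ → List ℕ
  | x :: y :: t => y :: x :: t
  | l => l

/-- `i` occurs to the right of both `i-1` and `i+1` in `w`. -/
def afterBoth (w : List ℕ) (i : ℕ) : Prop :=
  w.idxOf (i - 1) < w.idxOf i ∧ w.idxOf (i + 1) < w.idxOf i

/-! ## Shifted Knuth equivalence -/

/-- One shifted Knuth transformation:
(SK1) `xzy ∼ zxy` (x<y<z), (SK2) `yxz ∼ yzx` (x<y<z), (SK3) swap first two letters. -/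
inductive SKStep : List ℕ → List ℕ → Prop
  | sk1 (a b : List ℕ) (x y z : ℕ) (h1 : x < y) (h2 : y < z) :
      SKStep (a ++ x :: z :: y :: b) (a ++ z :: x :: y :: b)
  | sk2 (a b : List ℕ) (x y z : ℕ) (h1 : x < y) (h2 : y < z) :
      SKStep (a ++ y :: x :: z :: b) (a ++ y :: z :: x :: b)
  | sk3 (b : List ℕ) (x y : ℕ) : SKStep (x :: y :: b) (y :: x :: b)

/-- Shifted Knuth equivalence: the equivalence relation generated by `SKStep`. -/
def SKEquiv : List ℕ → List ℕ → Prop := Relation.EqvGen SKStep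

/-! ## Tableaux (as lists of rows) -/

/-- A strict partition, as a strictly decreasing list of positive integers. -/
def IsStrictPartition (lam : List ℕ) : Prop :=
  lam.Chain' (fun a b => b < a) ∧ ∀ x ∈ lam, 0 < x

/-- A partition, as a weakly decreasing list of positive integers. -/
def IsPartitionList (lam : List ℕ) : Prop :=
  lam.Chain' (fun a b => b ≤ a) ∧ ∀ x ∈ lam, 0 < x

/-- Entry of `T` in row `i` (0-indexed), position `k` within the row. -/
def tget (T : List (List ℕ)) (i k : ℕ) : ℕ := (T.getD i []).getD k 0

/-- `T` is a standard shifted tableau of shape the strict partition `lam`: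
row `i` (0-indexed) occupies visual columns `i, …, i + lamᵢ - 1`, entries are
`1, …, |lam|` each once, rows and columns strictly increase.  (The cell of row
`i+1` at position `k` sits below the cell of row `i` at position `k+1`.) -/
def IsShiftedStdTab (lam : List ℕ) (T : List (List ℕ)) : Prop :=
  T.map List.length = lam ∧
  T.flatten.Perm (List.range' 1 lam.sum) ∧
  (∀ r ∈ T, r.Chain' (· < ·)) ∧
  (∀ i k, i + 1 < T.length → k + 1 < (T.getD i []).length → k < (T.getD (i + 1) []).length →
    tget T i (k + 1) < tget T (i + 1) k)

/-- `T` is a standard Young tableau of (unshifted) shape the partition `lam`. -/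
def IsStdTab (lam : List ℕ) (T : List (List ℕ)) : Prop :=
  T.map List.length = lam ∧
  T.flatten.Perm (List.range' 1 lam.sum) ∧
  (∀ r ∈ T, r.Chain' (· < ·)) ∧
  (∀ i k, i + 1 < T.length → k < (T.getD i []).length → k < (T.getD (i + 1) []).length →
    tget T i k < tget T (i + 1) k)

/-- Index of the row of `T` containing the entry `v`. -/
def tabRowOf (T : List (List ℕ)) (v : ℕ) : ℕ := T.findIdx (fun r => r.contains v)

/-- Descent set of a standard (shifted or unshifted) tableau with entries `1, …, n`:
`{i : i lies strictly above i+1}`. -/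
def tabDes (n : ℕ) (T : List (List ℕ)) : Finset ℕ :=
  (Finset.Icc 1 (n - 1)).filter (fun i => tabRowOf T i < tabRowOf T (i + 1))

/-- Peak set of a standard tableau. -/
def tabPeak (n : ℕ) (T : List (List ℕ)) : Finset ℕ := peakOf (tabDes n T)

/-- Reading word of a tableau: rows from bottom to top, each row left to right. -/
def readingWord (T : List (List ℕ)) : List ℕ := T.reverse.flatten

/-! ## Marked (shifted) tableaux.  An entry is a pair `(v, p)` where `p = true`
means the letter is primed (`v′`); the order on the alphabet is
`1′ < 1 < 2′ < 2 < ⋯`. -/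

/-- Strict order on the marked alphabet. -/
def mLT (x y : ℕ × Bool) : Prop :=
  x.1 < y.1 ∨ (x.1 = y.1 ∧ x.2 = true ∧ y.2 = false)

/-- `T` is a marked-standard shifted tableau of shape the strict partition `lam`:
entries `1, …, |lam|` each once up to primes, rows and columns increasing in the
marked alphabet, no primed entries on the main diagonal (= first cell of each row). -/
def IsMarkedStdTab (lam : List ℕ) (T : List (List (ℕ × Bool))) : Prop :=
  T.map List.length = lam ∧
  (T.flatten.map Prod.fst).Perm (List.range' 1 lam.sum) ∧
  (∀ r ∈ T, r.Chain' mLT) ∧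
  (∀ i k, i + 1 < T.length → k + 1 < (T.getD i []).length → k < (T.getD (i + 1) []).length →
    mLT ((T.getD i []).getD (k + 1) (0, false)) ((T.getD (i + 1) []).getD k (0, false))) ∧
  (∀ r ∈ T, (r.getD 0 (0, false)).2 = false)

/-- Row index of the entry with value `v` (primed or not). -/
def mRowOf (T : List (List (ℕ × Bool))) (v : ℕ) : ℕ :=
  T.findIdx (fun r => r.any (fun e => e.1 == v))

/-- Whether the entry with value `v` is primed in `T`. -/
def mPrime (T : List (List (ℕ × Bool))) (v : ℕ) : Bool :=
  (((T.flatten).find? (fun e => e.1 == v)).getD (0, false)).2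

/-- Descent set of a marked-standard shifted tableau:
`i` is a descent iff (the entry `i` is unprimed and lies strictly above the `(i+1)`-entry)
or (the entry `i+1` is primed and lies weakly above the `i`-entry). -/
def mDes (n : ℕ) (T : List (List (ℕ × Bool))) : Finset ℕ :=
  (Finset.Icc 1 (n - 1)).filter (fun i =>
    (mPrime T i = false ∧ mRowOf T i < mRowOf T (i + 1)) ∨
    (mPrime T (i + 1) = true ∧ mRowOf T (i + 1) ≤ mRowOf T i))

/-- Remove all primes. -/
def unprime (T : List (List (ℕ × Bool))) : List (List ℕ) := T.map (fun r => r.map Prod.fst)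

/-! ## Sagan–Worley (shifted Schensted) insertion.
`swRow f x i t` inserts `x` into row `i` of `t` by Schensted bumping; a bumped
diagonal entry (position 0 of its row) sets off a chain of column insertions
`swCol` (the non-Schensted move).  The returned Boolean records whether a
non-Schensted move occurred.  `f` is a fuel parameter (always sufficient). -/

mutual
  def swRow : ℕ → ℕ → ℕ → List (List ℕ) → List (List ℕ) × Bool
    | 0, _, _, t => (t, false)
    | f + 1, x, i, t =>
      if i < t.length then
        let r := t.getD i []
        let pos := r.findIdx (fun y => decide (x < y))
        if pos < r.length then
          let y := r.getD pos 0
          let t' := t.set i (r.set pos x)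
          if pos = 0 then swCol f y (i + 1) t' else swRow f y (i + 1) t'
        else (t.set i (r ++ [x]), false)
      else (t ++ [[x]], false)
  def swCol : ℕ → ℕ → ℕ → List (List ℕ) → List (List ℕ) × Bool
    | 0, _, _, t => (t, true)
    | f + 1, y, c, t =>
      match (List.range t.length).find? (fun i =>
          decide (i ≤ c) && decide (c - i < (t.getD i []).length) &&
          decide (y < (t.getD i []).getD (c - i) 0)) with
      | some i =>
          let z := (t.getD i []).getD (c - i) 0
          swCol f z (c + 1) (t.set i ((t.getD i []).set (c - i) y))
      | none =>
          match (List.range t.length).find? (fun i =>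
              decide (i ≤ c) && decide ((t.getD i []).length = c - i)) with
          | some i => (t.set i ((t.getD i []) ++ [y]), true)
          | none => (t ++ [[y]], true)
end

/-- One Sagan–Worley insertion step, with ample fuel. -/
def swInsert (t : List (List ℕ)) (x : ℕ) : List (List ℕ) × Bool :=
  swRow (2 * t.flatten.length + x + 4) x 0 t

/-- Running state `(P, Q, k)` of the Sagan–Worley correspondence on the word `w`:
`P` is the insertion tableau, `Q` the (marked) recording tableau, `k` the next label.
The new cell of `Q` is primed exactly when a non-Schensted move occurred. -/
def swSteps (w : List ℕ) : List (List ℕ) × List (List (ℕ × Bool)) × ℕ :=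
  w.foldl (fun acc x =>
    let P := acc.1
    let Q := acc.2.1
    let k := acc.2.2
    let res := swInsert P x
    let P' := res.1
    let i := ((List.range P'.length).find?
      (fun i => decide ((P.getD i []).length < (P'.getD i []).length))).getD 0
    let Q' := if i < Q.length then Q.set i ((Q.getD i []) ++ [(k, res.2)])
              else Q ++ [[(k, res.2)]]
    (P', Q', k + 1)) ([], [], 1)

/-- The Sagan–Worley insertion tableau `P_SW(w)`. -/
def PSW (w : List ℕ) : List (List ℕ) := (swSteps w).1

/-- The Sagan–Worley recording tableau `Q_SW(w)` (a marked tableau). -/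
def QSW (w : List ℕ) : List (List (ℕ × Bool)) := (swSteps w).2.1

/-! ## Ordinary Robinson–Schensted insertion -/

def rsInsert : ℕ → List (List ℕ) → List (List ℕ)
  | x, [] => [[x]]
  | x, r :: rest =>
    let pos := r.findIdx (fun y => decide (x < y))
    if pos < r.length then (r.set pos x) :: rsInsert (r.getD pos 0) rest
    else (r ++ [x]) :: rest

/-- The Robinson–Schensted insertion tableau `P(w)`. -/
def rsP (w : List ℕ) : List (List ℕ) := w.foldl (fun t x => rsInsert x t) []

/-! ## Skew shifted tableaux and rectification -/

/-- A standard skew shifted tableau of shape `nu/lam`: row `i` occupies visual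
columns `i + lamᵢ, …, i + nuᵢ - 1`, filled by `1, …, |nu| - |lam|` each once,
with rows and columns strictly increasing. -/
def IsSkewShiftedStd (nu lam : List ℕ) (S : List (List ℕ)) : Prop :=
  lam.length ≤ nu.length ∧
  (∀ i, lam.getD i 0 ≤ nu.getD i 0) ∧
  S.map List.length = (List.range nu.length).map (fun i => nu.getD i 0 - lam.getD i 0) ∧
  S.flatten.Perm (List.range' 1 (nu.sum - lam.sum)) ∧
  (∀ r ∈ S, r.Chain' (· < ·)) ∧
  (∀ i c, i + 1 < nu.length →
    i + lam.getD i 0 ≤ c → c < i + nu.getD i 0 →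
    (i + 1) + lam.getD (i + 1) 0 ≤ c → c < (i + 1) + nu.getD (i + 1) 0 →
    (S.getD i []).getD (c - i - lam.getD i 0) 0 <
      (S.getD (i + 1) []).getD (c - (i + 1) - lam.getD (i + 1) 0) 0)

/-- Rectification of a skew shifted tableau (jeu de taquin); since sliding
preserves the shifted Knuth class of the reading word, it is the Sagan–Worley
insertion tableau of the reading word. -/
def rectify (S : List (List ℕ)) : List (List ℕ) := PSW (readingWord S)

/-- The standard shifted tableau of shape `mu` whose `i`-th row contains the
consecutive entries `mu₁+⋯+mu_{i-1}+1, …, mu₁+⋯+mu_i`. -/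
def Trow (mu : List ℕ) : List (List ℕ) :=
  (List.range mu.length).map (fun i => List.range' ((mu.take i).sum + 1) (mu.getD i 0))

/-! ## Quasisymmetric functions, Schur functions, Schur P/Q-functions, peak functions.
All live in the power series ring `MvPowerSeries ℕ ℤ` in variables `x₀, x₁, x₂, …`. -/

/-- The fundamental quasisymmetric function `F_D` of degree `n` for `D ⊆ [n-1]`:
`Σ x_{i₁} ⋯ x_{i_n}` over `i₁ ≤ ⋯ ≤ i_n` with `i_k < i_{k+1}` whenever `k ∈ D`
(1-indexed positions). -/
noncomputable def fundQS (n : ℕ) (D : Finset ℕ) : MvPowerSeries ℕ ℤ := fun m =>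
  (Nat.card {l : Fin n → ℕ // Monotone l ∧
    (∀ i j : Fin n, (j : ℕ) = (i : ℕ) + 1 → (j : ℕ) ∈ D → l i < l j) ∧
    (∑ k, Finsupp.single (l k) 1) = m} : ℤ)

/-- The Schur function `s_mu = Σ_{U ∈ SYT(mu)} F_{Des(U)}`, for `mu ⊢ n`. -/
noncomputable def schurF (n : ℕ) (mu : List ℕ) : MvPowerSeries ℕ ℤ :=
  ∑ᶠ T ∈ {T : List (List ℕ) | IsStdTab mu T}, fundQS n (tabDes n T)

/-- Schur's P-function `P_lam = Σ_{S ∈ ShSYT^±(lam)} F_{Des(S)}`, for `lam ⊢ n` strict. -/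
noncomputable def schurPF (n : ℕ) (lam : List ℕ) : MvPowerSeries ℕ ℤ :=
  ∑ᶠ S ∈ {S : List (List (ℕ × Bool)) | IsMarkedStdTab lam S}, fundQS n (mDes n S)

/-- Schur's Q-function `Q_lam = 2^{ℓ(lam)} P_lam`. -/
noncomputable def schurQF (n : ℕ) (lam : List ℕ) : MvPowerSeries ℕ ℤ :=
  (2 ^ lam.length : ℤ) • schurPF n lam

/-- The complete homogeneous symmetric function `h_n = F_∅`. -/
noncomputable def hFun (n : ℕ) : MvPowerSeries ℕ ℤ := fundQS n ∅

/-- The symmetric function `q_n` with `Σ q_n z^n = Π (1+x_i z)/(1-x_i z)`;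
equivalently `q_n = Σ_{α ⊨ n} 2^{ℓ(α)} M_α`, i.e. the coefficient of a monomial
of total degree `n` is `2^{#variables appearing}`. -/
noncomputable def qFun (n : ℕ) : MvPowerSeries ℕ ℤ := fun m =>
  if (m.sum fun _ e => e) = n then 2 ^ m.support.card else 0

/-- The peak function `K_P = 2^{|P|+1} Σ_{D ⊆ [n-1], P ⊆ D △ (D+1)} F_D`. -/
noncomputable def peakKF (n : ℕ) (P : Finset ℕ) : MvPowerSeries ℕ ℤ :=
  (2 ^ (P.card + 1) : ℤ) •
    ∑ D ∈ (Finset.Icc 1 (n - 1)).powerset.filter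
        (fun D => P ⊆ symmDiff D (D.image (· + 1))), fundQS n D

/-! ## The Malvenuto–Reutenauer algebra `ℤ𝔖`, as the free ℤ-module on words. -/

/-- The word with letters the set `A`, whose standardization is `w`. -/
def wordOn (A : Finset ℕ) (w : List ℕ) : List ℕ :=
  w.map (fun i => (A.sort (· ≤ ·)).getD (i - 1) 0)

/-- The Malvenuto–Reutenauer product of two basis permutations `w ∈ S_p`, `w' ∈ S_q`:
`w * w' = Σ uv` over pairs of words with `alph(u) ∪ alph(v) = [p+q]`, `st(u) = w`,
`st(v) = w'`. -/
noncomputable def mulMR (w w' : List ℕ) : (List ℕ) →₀ ℤ :=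
  ∑ A ∈ (Finset.Icc 1 (w.length + w'.length)).powersetCard w.length,
    Finsupp.single
      (wordOn A w ++ wordOn ((Finset.Icc 1 (w.length + w'.length)) \ A) w') 1

/-- The Malvenuto–Reutenauer coproduct of a basis permutation `w ∈ S_n`:
`Δ(w) = Σ_{i=0}^n w|_{[1,i]} ⊗ st(w|_{[i+1,n]})`. -/
noncomputable def coprodMR (w : List ℕ) :
    TensorProduct ℤ ((List ℕ) →₀ ℤ) ((List ℕ) →₀ ℤ) :=
  ∑ i ∈ Finset.range (w.length + 1),
    (Finsupp.single (w.filter (fun x => x ≤ i)) (1 : ℤ)) ⊗ₜ[ℤ]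
      (Finsupp.single (stWord (w.filter (fun x => i < x))) (1 : ℤ))

/-- `J_SK`: the span of the shifted Knuth differences `u - v`, `u ≡_SK v`. -/
noncomputable def JSK : Submodule ℤ ((List ℕ) →₀ ℤ) :=
  Submodule.span ℤ {x | ∃ n u v, IsPermWord n u ∧ IsPermWord n v ∧ SKEquiv u v ∧
    x = Finsupp.single u 1 - Finsupp.single v 1}

/-! ## Marked shifted semistandard tableaux and standardization (for Statement 19) -/

/-- A marked shifted (semistandard) tableau of shape the strict partition `lam`:
letters from `{1′ < 1 < 2′ < 2 < ⋯}`, rows and columns weakly increasing, each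
unprimed letter at most once per column, each primed letter at most once per row,
no primed entries on the main diagonal.  (Since rows/columns weakly increase,
the multiplicity constraints amount to: adjacent equal entries in a row are
unprimed and adjacent equal entries in a column are primed.) -/
def IsMarkedShiftedSSYT (lam : List ℕ) (T : List (List (ℕ × Bool))) : Prop :=
  IsStrictPartition lam ∧
  T.map List.length = lam ∧
  (∀ r ∈ T, ∀ e ∈ r, 0 < e.1) ∧
  (∀ r ∈ T, r.Chain' (fun x y => mLT x y ∨ (x = y ∧ x.2 = false))) ∧
  (∀ i k, i + 1 < T.length → k + 1 < (T.getD i []).length → k < (T.getD (i + 1) []).length →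
    (mLT ((T.getD i []).getD (k + 1) (0, false)) ((T.getD (i + 1) []).getD k (0, false)) ∨
      (((T.getD i []).getD (k + 1) (0, false)) = ((T.getD (i + 1) []).getD k (0, false)) ∧
        ((T.getD i []).getD (k + 1) (0, false)).2 = true))) ∧
  (∀ r ∈ T, (r.getD 0 (0, false)).2 = false)

/-- The cells of a marked tableau, as triples (row, visual column, entry). -/
def cellsOf (T : List (List (ℕ × Bool))) : List (ℕ × ℕ × (ℕ × Bool)) :=
  (T.zipIdx.map Prod.swap).flatMap (fun p => (p.2.zipIdx.map Prod.swap).map (fun q => (p.1, p.1 + q.1, q.2)))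

/-- Sorting key for standardization: letters are ordered by `1′ < 1 < 2′ < 2 < ⋯`;
equal unprimed letters are ordered left to right (by column), equal primed letters
top to bottom (by row). -/
def cellKey (c : ℕ × ℕ × (ℕ × Bool)) : ℕ × ℕ :=
  (2 * c.2.2.1 - (if c.2.2.2 then 1 else 0), if c.2.2.2 then c.1 else c.2.1)

/-- Lexicographic comparison of keys. -/
def keyLt (a b : ℕ × ℕ) : Bool := a.1 < b.1 || (a.1 == b.1 && a.2 < b.2)

/-- Standardization of a marked shifted tableau: each entry is replaced by its
rank (starting from 1) in the key order, keeping its prime. -/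
def stdization (T : List (List (ℕ × Bool))) : List (List (ℕ × Bool)) :=
  (T.zipIdx.map Prod.swap).map (fun p => (p.2.zipIdx.map Prod.swap).map (fun q =>
    (((cellsOf T).filter (fun c => keyLt (cellKey c) (cellKey (p.1, p.1 + q.1, q.2)))).length + 1,
      q.2.2)))

/-- Weight of a marked tableau: `wtOf T i` = number of entries equal to `i` or `i′`. -/
def wtOf (T : List (List (ℕ × Bool))) : ℕ → ℕ :=
  fun i => ((T.flatten).filter (fun e => e.1 == i)).length

/-! Unpriming does not move entries, so a peak `i` of `|S|` lies weakly above `i - 1` and strictly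
above `i + 1`. Whether `i - 1` and `i` are descents of `S` is then decided by the prime on `i`
alone. -/

theorem tabRowOf_unprime (S : List (List (ℕ × Bool))) (v : ℕ) :
    tabRowOf (unprime S) v = mRowOf S v := by
  simp only [tabRowOf, mRowOf, unprime, List.findIdx_map, Function.comp_def,
    List.contains_eq_any_beq, List.any_map, BEq.comm]

theorem mem_tabPeak_iff {n : ℕ} {T : List (List ℕ)} {i : ℕ} :
    i ∈ tabPeak n T ↔ 2 ≤ i ∧ i < n ∧
      tabRowOf T i < tabRowOf T (i + 1) ∧ tabRowOf T i ≤ tabRowOf T (i - 1) := by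
  simp only [tabPeak, peakOf, tabDes, Finset.mem_filter, Finset.mem_Icc]
  constructor
  · rintro ⟨⟨⟨h1, hn⟩, hdes⟩, hne, hprev⟩
    have hsucc : i - 1 + 1 = i := by omega
    rw [hsucc] at hprev
    exact ⟨by omega, by omega, hdes, by omega⟩
  · rintro ⟨h2, hn, hdes, hprev⟩
    have hsucc : i - 1 + 1 = i := by omega
    rw [hsucc]
    exact ⟨⟨⟨by omega, by omega⟩, hdes⟩, by omega, by omega⟩

theorem mem_symmDiff_image_add_one_iff {D : Finset ℕ} {i : ℕ} (hi : 1 ≤ i) :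
    i ∈ symmDiff D (D.image (· + 1)) ↔ (i ∈ D ↔ i - 1 ∉ D) := by
  have himage : i ∈ D.image (· + 1) ↔ i - 1 ∈ D := by
    simp only [Finset.mem_image]
    exact ⟨fun ⟨j, hj, hji⟩ => by rwa [← hji, Nat.add_sub_cancel], fun h => ⟨i - 1, h, by omega⟩⟩
  rw [Finset.mem_symmDiff, himage]
  tauto

section PeakOfUnprime

variable {n i : ℕ} {S : List (List (ℕ × Bool))}

theorem mDes_of_mem_tabPeak_of_primed (hi : i ∈ tabPeak n (unprime S))
    (hp : mPrime S i = true) : i - 1 ∈ mDes n S ∧ i ∉ mDes n S := by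
  rw [mem_tabPeak_iff] at hi
  simp only [tabRowOf_unprime] at hi
  obtain ⟨h2, hn, hdes, hprev⟩ := hi
  have hsucc : i - 1 + 1 = i := by omega
  simp only [mDes, Finset.mem_filter, Finset.mem_Icc, hsucc, hp]
  refine ⟨⟨⟨by omega, by omega⟩, Or.inr ⟨trivial, hprev⟩⟩, ?_⟩
  rintro ⟨-, ⟨h, -⟩ | ⟨-, hle⟩⟩
  · exact Bool.noConfusion h
  · omega

theorem mDes_of_mem_tabPeak_of_unprimed (hi : i ∈ tabPeak n (unprime S))
    (hp : mPrime S i = false) : i - 1 ∉ mDes n S ∧ i ∈ mDes n S := by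
  rw [mem_tabPeak_iff] at hi
  simp only [tabRowOf_unprime] at hi
  obtain ⟨h2, hn, hdes, hprev⟩ := hi
  have hsucc : i - 1 + 1 = i := by omega
  simp only [mDes, Finset.mem_filter, Finset.mem_Icc, hsucc, hp]
  refine ⟨?_, ⟨by omega, by omega⟩, Or.inl ⟨trivial, hdes⟩⟩
  rintro ⟨-, ⟨-, hlt⟩ | ⟨h, -⟩⟩
  · omega
  · exact Bool.noConfusion h

end PeakOfUnprime

/-- For every marked-standard shifted tableau `S`,
`Peak(|S|) ⊆ Des(S) △ (Des(S)+1)`; moreover if `i ∈ Peak(|S|)` is primed in `S`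
then `i-1 ∈ Des(S)` and `i ∉ Des(S)`, and if unprimed then `i-1 ∉ Des(S)` and
`i ∈ Des(S)`. -/
theorem peak_unprime_subset_symmDiff (n : ℕ) (lam : List ℕ)
    (S : List (List (ℕ × Bool)))
    (hlam : IsStrictPartition lam) (hsum : lam.sum = n)
    (hS : IsMarkedStdTab lam S) :
    tabPeak n (unprime S) ⊆ symmDiff (mDes n S) ((mDes n S).image (· + 1)) ∧
    ∀ i ∈ tabPeak n (unprime S),
      (mPrime S i = true → (i - 1 ∈ mDes n S ∧ i ∉ mDes n S)) ∧
      (mPrime S i = false → (i - 1 ∉ mDes n S ∧ i ∈ mDes n S)) := by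
  refine ⟨fun i hi => ?_, fun i hi =>
    ⟨mDes_of_mem_tabPeak_of_primed hi, mDes_of_mem_tabPeak_of_unprimed hi⟩⟩
  have hi1 : 1 ≤ i := by have := (mem_tabPeak_iff.mp hi).1; omega
  rw [mem_symmDiff_image_add_one_iff hi1]
  cases hp : mPrime S i
  · obtain ⟨hprev, hcur⟩ := mDes_of_mem_tabPeak_of_unprimed hi hp
    exact iff_of_true hcur hprev
  · obtain ⟨hprev, hcur⟩ := mDes_of_mem_tabPeak_of_primed hi hp
    exact iff_of_false hcur (not_not.mpr hprev)
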